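/- arXiv:1511.02922 — 2 statements merged into one kernel-verified Lean document; each statement's English description precedes it below -/
import Mathlib

section
/- Let s > 2 and suppose coefficients a_j satisfy |a_j| ≤ c ‖j‖₂^{-s} for all j ∈ ℕ² and the Gram values satisfy |G(j,l)| ≤ γ (1 + ‖j-l‖₂)^{-s}. Then for every n₁ ∈ ℕ, ∑_{j₁ > n₁, j₂ ∈ ℕ} ∑_{l₁ > n₁, l₂ ∈ ℕ} |a_j| |a_l| |G(j,l)| ≤ C n₁^{-(s-1)} for a constant C depending only on c, γ, s. -/
/-!
The summand factors after two crude bounds: `‖j‖ ≥ √(j₁ j₂)` gives `|a_j| ≤ c j₁^{-s/2} j₂^{-s/2}`,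
and `1 + ‖j - l‖ ≥ 1 + |j₁ - l₁|` gives `|G(j,l)| ≤ γ (1 + |j₁ - l₁|)^{-s/2}`. So the double sum is
at most `c²γ` times a sum over `(j₁, l₁)` times a sum over `(j₂, l₂)`; computing in `ℝ≥0∞` makes
this rearrangement free of summability side conditions. The second factor is `(∑ k^{-s/2})²`.
For the first, `j₁ ≤ l₁ + (1 + |j₁ - l₁|)` forces one of the two to exceed `j₁ / 2`, whence
`l₁^{-s/2} (1 + |j₁ - l₁|)^{-s/2} ≤ 2^{s/2} j₁^{-s/2} (l₁^{-s/2} + (1 + |j₁ - l₁|)^{-s/2})`;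
summing over `l₁` leaves `O(j₁^{-s})`, whose tail beyond `n₁` is `O(n₁^{-(s-1)})` by the integral
test.
-/

noncomputable def nrm (j : ℕ × ℕ) : ℝ := Real.sqrt ((j.1 : ℝ)^2 + (j.2 : ℝ)^2)

noncomputable def dst (j l : ℕ × ℕ) : ℝ :=
  Real.sqrt (((j.1 : ℝ) - l.1)^2 + ((j.2 : ℝ) - l.2)^2)

open scoped ENNReal
open Function

theorem tsum_eq_toReal_tsum_ofReal {α : Type*} {f : α → ℝ} (hf : ∀ a, 0 ≤ f a) :
    ∑' a, f a = (∑' a, ENNReal.ofReal (f a)).toReal := by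
  rw [ENNReal.tsum_toReal_eq fun _ => ENNReal.ofReal_ne_top]
  simp only [ENNReal.toReal_ofReal (hf _)]

theorem tsum_tsum_le_of_ofReal_le {α β : Type*} {F : α → β → ℝ} (hF : ∀ a b, 0 ≤ F a b)
    {B : ℝ} (hB : 0 ≤ B) (h : ∑' a, ∑' b, ENNReal.ofReal (F a b) ≤ ENNReal.ofReal B) :
    ∑' a, ∑' b, F a b ≤ B := by
  have hfin : ∑' a, ∑' b, ENNReal.ofReal (F a b) ≠ ∞ :=
    ne_top_of_le_ne_top ENNReal.ofReal_ne_top h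
  simp_rw [tsum_eq_toReal_tsum_ofReal (hF _)]
  rw [← ENNReal.tsum_toReal_eq (ENNReal.ne_top_of_tsum_ne_top hfin)]
  exact ENNReal.toReal_le_of_le_ofReal hB h

theorem ENNReal.tsum_tsum_prod_mul {α β : Type*} (f : α → α → ℝ≥0∞) (g : β → β → ℝ≥0∞) :
    ∑' x : α × β, ∑' y : α × β, f x.1 y.1 * g x.2 y.2 =
      (∑' a, ∑' c, f a c) * ∑' b, ∑' d, g b d := by
  simp_rw [ENNReal.tsum_prod', ← ENNReal.tsum_mul_right, ← ENNReal.tsum_mul_left]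
  exact tsum_congr fun a => ENNReal.tsum_comm

theorem ENNReal.tsum_tsum_subtypeProd_mul {α β : Type*} (P : α → Prop) (Q : β → Prop)
    (f : α → α → ℝ≥0∞) (g : β → β → ℝ≥0∞) :
    ∑' j : {p : α × β // P p.1 ∧ Q p.2}, ∑' l : {p : α × β // P p.1 ∧ Q p.2},
        f j.1.1 l.1.1 * g j.1.2 l.1.2 =
      (∑' x : {a // P a}, ∑' y : {a // P a}, f x y) *
        ∑' x : {b // Q b}, ∑' y : {b // Q b}, g x y := by
  let e := (Equiv.subtypeProdEquivProd (p := P) (q := Q)).symm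
  rw [← ENNReal.tsum_tsum_prod_mul, ← e.tsum_eq]
  exact tsum_congr fun x => (e.tsum_eq _).symm

theorem tsum_tsum_subtypeProd_le_of_le_mul {α β : Type*} {P : α → Prop} {Q : β → Prop}
    {F : {p : α × β // P p.1 ∧ Q p.2} → {p : α × β // P p.1 ∧ Q p.2} → ℝ}
    {f : α → α → ℝ} {g : β → β → ℝ} {A B₁ B₂ : ℝ} (hF : ∀ j l, 0 ≤ F j l) (hA : 0 ≤ A)
    (hf : ∀ x y, 0 ≤ f x y) (hB₁ : 0 ≤ B₁) (hB₂ : 0 ≤ B₂)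
    (hFfg : ∀ j l, F j l ≤ A * (f j.1.1 l.1.1 * g j.1.2 l.1.2))
    (hf_sum : ∑' x : {a // P a}, ∑' y : {a // P a}, ENNReal.ofReal (f x y) ≤ ENNReal.ofReal B₁)
    (hg_sum : ∑' x : {b // Q b}, ∑' y : {b // Q b}, ENNReal.ofReal (g x y) ≤ ENNReal.ofReal B₂) :
    ∑' j, ∑' l, F j l ≤ A * (B₁ * B₂) := by
  refine tsum_tsum_le_of_ofReal_le hF (by positivity) ?_
  calc ∑' j, ∑' l, ENNReal.ofReal (F j l)
      ≤ ∑' j : {p : α × β // P p.1 ∧ Q p.2}, ∑' l : {p : α × β // P p.1 ∧ Q p.2},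
          ENNReal.ofReal A * (ENNReal.ofReal (f j.1.1 l.1.1) * ENNReal.ofReal (g j.1.2 l.1.2)) := by
        gcongr with j l
        rw [← ENNReal.ofReal_mul (hf _ _), ← ENNReal.ofReal_mul hA]
        exact ENNReal.ofReal_le_ofReal (hFfg j l)
    _ = ENNReal.ofReal A * ((∑' x : {a // P a}, ∑' y : {a // P a}, ENNReal.ofReal (f x y)) *
          ∑' x : {b // Q b}, ∑' y : {b // Q b}, ENNReal.ofReal (g x y)) := by
        simp_rw [ENNReal.tsum_mul_left]
        rw [ENNReal.tsum_tsum_subtypeProd_mul P Q (fun x y => ENNReal.ofReal (f x y))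
          (fun x y => ENNReal.ofReal (g x y))]
    _ ≤ ENNReal.ofReal A * (ENNReal.ofReal B₁ * ENNReal.ofReal B₂) := by gcongr
    _ = ENNReal.ofReal (A * (B₁ * B₂)) := by rw [ENNReal.ofReal_mul hA, ENNReal.ofReal_mul hB₁]

theorem rpow_neg_mul_rpow_neg_le_of_le_add {p x y z : ℝ} (hp : 0 ≤ p) (hx : 0 < x) (hy : 0 < y)
    (hz : 0 < z) (h : x ≤ y + z) :
    y ^ (-p) * z ^ (-p) ≤ 2 ^ p * x ^ (-p) * (y ^ (-p) + z ^ (-p)) := by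
  wlog hyz : y ≤ z generalizing y z
  · rw [mul_comm, add_comm]
    exact this hz hy (by linarith) (le_of_not_ge hyz)
  have hz_le : z ^ (-p) ≤ 2 ^ p * x ^ (-p) :=
    calc z ^ (-p) ≤ (x / 2) ^ (-p) :=
          Real.rpow_le_rpow_of_nonpos (by positivity) (by linarith) (neg_nonpos.mpr hp)
      _ = 2 ^ p * x ^ (-p) := by
          rw [Real.div_rpow hx.le zero_le_two, Real.rpow_neg zero_le_two, div_inv_eq_mul, mul_comm]
  calc y ^ (-p) * z ^ (-p) ≤ y ^ (-p) * (2 ^ p * x ^ (-p)) := by gcongr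
    _ ≤ 2 ^ p * x ^ (-p) * (y ^ (-p) + z ^ (-p)) := by
        rw [mul_comm]
        gcongr
        exact le_add_of_nonneg_right (by positivity)

theorem sqrt_sq_add_sq_rpow_neg_le {x y s : ℝ} (hx : 0 < x) (hy : 0 < y) (hs : 0 ≤ s) :
    √(x ^ 2 + y ^ 2) ^ (-s) ≤ x ^ (-(s / 2)) * y ^ (-(s / 2)) := by
  rw [Real.sqrt_eq_rpow, ← Real.rpow_mul (by positivity), ← Real.mul_rpow hx.le hy.le,
    show 1 / 2 * -s = -(s / 2) by ring]
  exact Real.rpow_le_rpow_of_nonpos (by positivity) (by nlinarith [sq_nonneg (x - y)])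
    (by linarith)

theorem one_add_dst_rpow_neg_le {s : ℝ} (hs : 0 ≤ s) (j l : ℕ × ℕ) :
    (1 + dst j l) ^ (-s) ≤ (1 + |(j.1 : ℝ) - l.1|) ^ (-s) :=
  Real.rpow_le_rpow_of_nonpos (by positivity)
    (add_le_add_right (Real.abs_le_sqrt (le_add_of_nonneg_right (sq_nonneg _))) 1)
    (neg_nonpos.mpr hs)

noncomputable def intBracketSum (p : ℝ) : ℝ := ∑' k : ℤ, (1 + |(k : ℝ)|) ^ (-p)

theorem summable_one_add_abs_int_rpow_neg {p : ℝ} (hp : 1 < p) :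
    Summable fun k : ℤ => (1 + |(k : ℝ)|) ^ (-p) := by
  have hnat : Summable fun n : ℕ => (1 + (n : ℝ)) ^ (-p) := by
    simpa [add_comm] using
      (summable_nat_add_iff 1).mpr (Real.summable_nat_rpow.mpr (neg_lt_neg hp))
  exact .of_nat_of_neg (by simpa using hnat) (by simpa using hnat)

theorem one_le_intBracketSum {p : ℝ} (hp : 1 < p) : 1 ≤ intBracketSum p := by
  simpa [intBracketSum] using
    (summable_one_add_abs_int_rpow_neg hp).le_tsum 0 fun _ _ => by positivity

theorem tsum_ofReal_one_add_abs_rpow_neg_le {α : Type*} {p : ℝ} (hp : 1 < p) {f : α → ℤ}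
    (hf : Injective f) :
    ∑' a, ENNReal.ofReal ((1 + |(f a : ℝ)|) ^ (-p)) ≤ ENNReal.ofReal (intBracketSum p) := by
  rw [intBracketSum, ENNReal.ofReal_tsum_of_nonneg (fun _ => by positivity)
    (summable_one_add_abs_int_rpow_neg hp)]
  exact ENNReal.tsum_comp_le_tsum_of_injective hf fun k => ENNReal.ofReal ((1 + |(k : ℝ)|) ^ (-p))

theorem tsum_ofReal_rpow_neg_le {p : ℝ} (hp : 1 < p) {P : ℕ → Prop} (hP : ∀ y, P y → 1 ≤ y) :
    ∑' y : {y // P y}, ENNReal.ofReal ((y : ℝ) ^ (-p)) ≤ ENNReal.ofReal (intBracketSum p) := by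
  convert tsum_ofReal_one_add_abs_rpow_neg_le hp (f := fun y : {y // P y} => (y : ℤ) - 1)
    (fun y z h => Subtype.ext (by simpa using h)) using 4 with y
  have : (1 : ℝ) ≤ y := by exact_mod_cast hP y y.2
  rw [Int.cast_sub, Int.cast_natCast, Int.cast_one, abs_of_nonneg (by linarith), add_sub_cancel]

theorem tsum_ofReal_one_add_abs_sub_rpow_neg_le {p : ℝ} (hp : 1 < p) (x : ℕ) {P : ℕ → Prop} :
    ∑' y : {y // P y}, ENNReal.ofReal ((1 + |(x : ℝ) - y|) ^ (-p)) ≤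
      ENNReal.ofReal (intBracketSum p) := by
  convert tsum_ofReal_one_add_abs_rpow_neg_le hp (f := fun y : {y // P y} => (x : ℤ) - y)
    (fun y z h => Subtype.ext (by simpa using h)) using 4 with y
  push_cast; rfl

theorem tsum_ofReal_rpow_neg_Ioi_le {s : ℝ} (hs : 1 < s) {n : ℕ} (hn : 0 < n) :
    ∑' x : {x : ℕ // n < x}, ENNReal.ofReal ((x : ℝ) ^ (-s)) ≤
      ENNReal.ofReal ((n : ℝ) ^ (-(s - 1)) / (s - 1)) := by
  have hn' : (0 : ℝ) < n := by exact_mod_cast hn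
  have hshift : Surjective fun m : ℕ => (⟨m + n + 1, by omega⟩ : {x : ℕ // n < x}) :=
    fun x => ⟨x - n - 1, Subtype.ext (by simp only; have := x.2; omega)⟩
  have hsum : Summable fun m : ℕ => ((m + n + 1 : ℕ) : ℝ) ^ (-s) :=
    (summable_nat_add_iff (n + 1)).mpr (Real.summable_nat_rpow.mpr (neg_lt_neg hs))
  have hint : ∑' m : ℕ, ((m + n + 1 : ℕ) : ℝ) ^ (-s) ≤ ∫ t in Set.Ioi (n : ℝ), t ^ (-s) :=
    AntitoneOn.tsum_comp_add_le_integral n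
      (fun x hx y _ hxy => Real.rpow_le_rpow_of_nonpos (hn'.trans_le hx) hxy (by linarith))
      (integrableOn_Ioi_rpow_of_lt (by linarith) hn')
      (fun t ht => Real.rpow_nonneg (hn'.trans ht).le _)
  rw [integral_Ioi_rpow_of_lt (by linarith) hn'] at hint
  calc ∑' x : {x : ℕ // n < x}, ENNReal.ofReal ((x : ℝ) ^ (-s))
      ≤ ∑' m : ℕ, ENNReal.ofReal (((m + n + 1 : ℕ) : ℝ) ^ (-s)) :=
        ENNReal.tsum_le_tsum_comp_of_surjective hshift fun x => ENNReal.ofReal ((x : ℝ) ^ (-s))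
    _ = ENNReal.ofReal (∑' m : ℕ, ((m + n + 1 : ℕ) : ℝ) ^ (-s)) :=
        (ENNReal.ofReal_tsum_of_nonneg (fun _ => by positivity) hsum).symm
    _ ≤ ENNReal.ofReal ((n : ℝ) ^ (-(s - 1)) / (s - 1)) := by
        refine ENNReal.ofReal_le_ofReal (hint.trans_eq ?_)
        rw [show -s + 1 = -(s - 1) by ring, neg_div, ← div_neg, neg_neg]

noncomputable def decayKernel (s : ℝ) (x y : ℕ) : ℝ :=
  (x : ℝ) ^ (-(s / 2)) * (y : ℝ) ^ (-(s / 2)) * (1 + |(x : ℝ) - y|) ^ (-(s / 2))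

theorem decayKernel_nonneg (s : ℝ) (x y : ℕ) : 0 ≤ decayKernel s x y := by
  rw [decayKernel]; positivity

theorem decayKernel_le {s : ℝ} (hs : 0 ≤ s) {x y : ℕ} (hx : 0 < x) (hy : 0 < y) :
    decayKernel s x y ≤
      2 ^ (s / 2) * (x : ℝ) ^ (-s) * ((y : ℝ) ^ (-(s / 2)) + (1 + |(x : ℝ) - y|) ^ (-(s / 2))) := by
  have hx' : (0 : ℝ) < x := by exact_mod_cast hx
  have hsplit := rpow_neg_mul_rpow_neg_le_of_le_add (p := s / 2) (by linarith) hx'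
    (by exact_mod_cast hy : (0 : ℝ) < y) (by positivity : (0 : ℝ) < 1 + |(x : ℝ) - y|)
    (by linarith [le_abs_self ((x : ℝ) - y)])
  have hsq : (x : ℝ) ^ (-(s / 2)) * (x : ℝ) ^ (-(s / 2)) = (x : ℝ) ^ (-s) := by
    rw [← Real.rpow_add hx']; ring_nf
  calc decayKernel s x y
      = (x : ℝ) ^ (-(s / 2)) * ((y : ℝ) ^ (-(s / 2)) * (1 + |(x : ℝ) - y|) ^ (-(s / 2))) := by
        rw [decayKernel, mul_assoc]
    _ ≤ (x : ℝ) ^ (-(s / 2)) * (2 ^ (s / 2) * (x : ℝ) ^ (-(s / 2)) *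
          ((y : ℝ) ^ (-(s / 2)) + (1 + |(x : ℝ) - y|) ^ (-(s / 2)))) := by gcongr
    _ = _ := by rw [← hsq]; ring

theorem tsum_tsum_decayKernel_le {s : ℝ} (hs : 2 < s) {n : ℕ} (hn : 0 < n) :
    ∑' x : {x : ℕ // n < x}, ∑' y : {y : ℕ // n < y}, ENNReal.ofReal (decayKernel s x y) ≤
      ENNReal.ofReal
        (2 ^ (s / 2) * (2 * intBracketSum (s / 2)) / (s - 1) * (n : ℝ) ^ (-(s - 1))) := by
  have hp : 1 < s / 2 := by linarith
  set W := intBracketSum (s / 2)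
  have hW : 0 ≤ W := zero_le_one.trans (one_le_intBracketSum hp)
  calc ∑' x : {x : ℕ // n < x}, ∑' y : {y : ℕ // n < y}, ENNReal.ofReal (decayKernel s x y)
      ≤ ∑' x : {x : ℕ // n < x}, ∑' y : {y : ℕ // n < y},
          ENNReal.ofReal (2 ^ (s / 2) * (x : ℝ) ^ (-s)) *
            (ENNReal.ofReal ((y : ℝ) ^ (-(s / 2))) +
              ENNReal.ofReal ((1 + |(x : ℝ) - y|) ^ (-(s / 2)))) := by
        gcongr with x y
        rw [← ENNReal.ofReal_add (by positivity) (by positivity),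
          ← ENNReal.ofReal_mul (by positivity)]
        exact ENNReal.ofReal_le_ofReal (decayKernel_le (by linarith) (by omega) (by omega))
    _ ≤ ∑' x : {x : ℕ // n < x}, ENNReal.ofReal (2 ^ (s / 2) * (x : ℝ) ^ (-s)) *
          (ENNReal.ofReal W + ENNReal.ofReal W) := by
        simp_rw [ENNReal.tsum_mul_left, ENNReal.tsum_add]
        gcongr with x
        · exact tsum_ofReal_rpow_neg_le hp fun _ h => by omega
        · exact tsum_ofReal_one_add_abs_sub_rpow_neg_le hp x
    _ = ENNReal.ofReal (2 ^ (s / 2)) *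
          (∑' x : {x : ℕ // n < x}, ENNReal.ofReal ((x : ℝ) ^ (-s))) * ENNReal.ofReal (2 * W) := by
        simp_rw [ENNReal.ofReal_mul (by positivity : (0 : ℝ) ≤ 2 ^ (s / 2)), ENNReal.tsum_mul_right,
          ENNReal.tsum_mul_left, two_mul, ENNReal.ofReal_add hW hW]
    _ ≤ ENNReal.ofReal (2 ^ (s / 2)) * ENNReal.ofReal ((n : ℝ) ^ (-(s - 1)) / (s - 1)) *
          ENNReal.ofReal (2 * W) := by
        gcongr
        exact tsum_ofReal_rpow_neg_Ioi_le (by linarith) hn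
    _ = _ := by
        have hn' : 0 ≤ (n : ℝ) ^ (-(s - 1)) / (s - 1) :=
          div_nonneg (by positivity) (by linarith)
        rw [← ENNReal.ofReal_mul (by positivity), ← ENNReal.ofReal_mul (by positivity)]
        ring_nf

theorem tsum_tsum_ofReal_rpow_neg_mul_le {p : ℝ} (hp : 1 < p) {P : ℕ → Prop}
    (hP : ∀ y, P y → 1 ≤ y) :
    ∑' x : {x // P x}, ∑' y : {y // P y}, ENNReal.ofReal ((x : ℝ) ^ (-p) * (y : ℝ) ^ (-p)) ≤
      ENNReal.ofReal (intBracketSum p ^ 2) := by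
  have hW : 0 ≤ intBracketSum p := zero_le_one.trans (one_le_intBracketSum hp)
  have hsplit : ∀ x y : ℕ, ENNReal.ofReal ((x : ℝ) ^ (-p) * (y : ℝ) ^ (-p)) =
      ENNReal.ofReal ((x : ℝ) ^ (-p)) * ENNReal.ofReal ((y : ℝ) ^ (-p)) :=
    fun _ _ => ENNReal.ofReal_mul (by positivity)
  simp_rw [hsplit, ENNReal.tsum_mul_left, ENNReal.tsum_mul_right, sq, ENNReal.ofReal_mul hW]
  exact mul_le_mul' (tsum_ofReal_rpow_neg_le hp hP) (tsum_ofReal_rpow_neg_le hp hP)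

theorem mul_mul_le_decayKernel_mul {s c γ A B Γ : ℝ} (hs : 0 ≤ s) (hc : 0 ≤ c) (hγ : 0 ≤ γ)
    {j l : ℕ × ℕ} (hj₁ : 0 < j.1) (hj₂ : 0 < j.2) (hl₁ : 0 < l.1) (hl₂ : 0 < l.2)
    (hB : 0 ≤ B) (hΓ : 0 ≤ Γ) (hAj : A ≤ c * nrm j ^ (-s)) (hBl : B ≤ c * nrm l ^ (-s))
    (hΓjl : Γ ≤ γ * (1 + dst j l) ^ (-s)) :
    A * B * Γ ≤ c * c * γ *
      (decayKernel s j.1 l.1 * ((j.2 : ℝ) ^ (-(s / 2)) * (l.2 : ℝ) ^ (-(s / 2)))) := by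
  have hnrm : ∀ i : ℕ × ℕ, 0 < i.1 → 0 < i.2 →
      nrm i ^ (-s) ≤ (i.1 : ℝ) ^ (-(s / 2)) * (i.2 : ℝ) ^ (-(s / 2)) := fun i h₁ h₂ =>
    sqrt_sq_add_sq_rpow_neg_le (by exact_mod_cast h₁) (by exact_mod_cast h₂) hs
  have hdst : (1 + dst j l) ^ (-s) ≤ (1 + |(j.1 : ℝ) - l.1|) ^ (-(s / 2)) :=
    (one_add_dst_rpow_neg_le hs j l).trans
      (Real.rpow_le_rpow_of_exponent_le (by linarith [abs_nonneg ((j.1 : ℝ) - l.1)])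
        (by linarith))
  calc A * B * Γ
      ≤ (c * ((j.1 : ℝ) ^ (-(s / 2)) * (j.2 : ℝ) ^ (-(s / 2)))) *
          (c * ((l.1 : ℝ) ^ (-(s / 2)) * (l.2 : ℝ) ^ (-(s / 2)))) *
          (γ * (1 + |(j.1 : ℝ) - l.1|) ^ (-(s / 2))) := by
        gcongr
        · exact hAj.trans (by gcongr; exact hnrm j hj₁ hj₂)
        · exact hBl.trans (by gcongr; exact hnrm l hl₁ hl₂)
        · exact hΓjl.trans (by gcongr)
    _ = _ := by rw [decayKernel]; ring

theorem stmt7 (s c γ : ℝ) (hs : 2 < s) (hc : 0 < c) (hγ : 0 < γ)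
    (a : ℕ × ℕ → ℂ) (G : ℕ × ℕ → ℕ × ℕ → ℂ)
    (ha : ∀ j : ℕ × ℕ, 1 ≤ j.1 → 1 ≤ j.2 → ‖a j‖ ≤ c * nrm j ^ (-s))
    (hG : ∀ j l : ℕ × ℕ, 1 ≤ j.1 → 1 ≤ j.2 → 1 ≤ l.1 → 1 ≤ l.2 →
      ‖G j l‖ ≤ γ * (1 + dst j l) ^ (-s)) :
    ∃ C : ℝ, 0 < C ∧ ∀ n₁ : ℕ, 1 ≤ n₁ →
      ∑' j : {p : ℕ × ℕ // n₁ < p.1 ∧ 1 ≤ p.2},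
        ∑' l : {p : ℕ × ℕ // n₁ < p.1 ∧ 1 ≤ p.2},
          ‖a j.1‖ * ‖a l.1‖ * ‖G j.1 l.1‖ ≤ C * (n₁ : ℝ) ^ (-(s - 1)) := by
  have hp : 1 < s / 2 := by linarith
  set W := intBracketSum (s / 2)
  have hW : 1 ≤ W := one_le_intBracketSum hp
  have hK : 0 < 2 ^ (s / 2) * (2 * W) / (s - 1) := div_pos (by positivity) (by linarith)
  refine ⟨c * c * γ * (2 ^ (s / 2) * (2 * W) / (s - 1) * W ^ 2), by positivity, fun n hn => ?_⟩
  have hsummand : ∀ j l : {p : ℕ × ℕ // n < p.1 ∧ 1 ≤ p.2},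
      ‖a j.1‖ * ‖a l.1‖ * ‖G j.1 l.1‖ ≤ c * c * γ *
        (decayKernel s j.1.1 l.1.1 * ((j.1.2 : ℝ) ^ (-(s / 2)) * (l.1.2 : ℝ) ^ (-(s / 2)))) :=
    fun j l => mul_mul_le_decayKernel_mul (by linarith) hc.le hγ.le (by omega) j.2.2 (by omega)
      l.2.2 (norm_nonneg _) (norm_nonneg _) (ha _ (by omega) j.2.2) (ha _ (by omega) l.2.2)
      (hG _ _ (by omega) j.2.2 (by omega) l.2.2)
  calc _ ≤ c * c * γ * (2 ^ (s / 2) * (2 * W) / (s - 1) * (n : ℝ) ^ (-(s - 1)) * W ^ 2) :=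
        tsum_tsum_subtypeProd_le_of_le_mul
          (g := fun x y : ℕ => (x : ℝ) ^ (-(s / 2)) * (y : ℝ) ^ (-(s / 2)))
          (fun _ _ => by positivity) (by positivity) (decayKernel_nonneg s) (by positivity)
          (by positivity) hsummand
          (tsum_tsum_decayKernel_le hs hn) (tsum_tsum_ofReal_rpow_neg_mul_le hp fun _ h => h)
    _ = _ := by ring
end

section
/- Let {ψ_j : j ∈ ℕ²} be a frame for H with lower frame bound A and upper frame bound B, and let g = ∑_{1≤l≤n} a_l ψ_l be an element of H_n = span{ψ_j : 1 ≤ j ≤ n}. If the localization |⟨ψ_j, ψ_l⟩| ≤ γ(1+‖j−l‖₂)^{-s} holds with s > 2, then ∑_{j₁ > m₁, j₂ ∈ ℕ} |⟨g, ψ_j⟩|² ≤ ‖a‖₂² · (2sγ²/(s−1)²) · n₁ n₂ · (m₁ − n₁)^{-(s-1)} for all m₁ > n₁. -/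
/-!
Expanding `g` and applying the localization bound and Cauchy–Schwarz gives
`|⟨g, ψ_j⟩|² ≤ ‖a‖₂² γ² ∑_l (1 + ‖j - l‖₂)^(-2s)`, and
`(1 + |j₁ - l₁|) (1 + |j₂ - l₂|) ≤ (1 + ‖j - l‖₂)²` splits each term into a product of
one-dimensional weights. Over the quadrant `j₁ > m₁, j₂ ≥ 1` the sum of such a product is a
tail sum, at most `(m₁ - n₁)^(1-s) / (s - 1)` by telescoping `x ↦ x^(1-s)` through the mean
value theorem, times a sum over a whole line, at most `2s / (s - 1)`; there are `n₁ n₂`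
indices `l`.
-/

open scoped InnerProductSpace

def Pos2 : Type := {p : ℕ × ℕ // 1 ≤ p.1 ∧ 1 ≤ p.2}

namespace Real

lemma mul_rpow_neg_le_sub_rpow {s t : ℝ} (hs : 1 ≤ s) (ht : 0 < t) :
    (s - 1) * (t + 1) ^ (-s) ≤ t ^ (1 - s) - (t + 1) ^ (1 - s) := by
  obtain ⟨c, ⟨htc, hct⟩, hc⟩ := exists_hasDerivAt_eq_slope (fun x : ℝ => x ^ (1 - s))
    (fun x => (1 - s) * x ^ (-s)) (lt_add_one t)
    (continuousOn_id.rpow_const fun x hx => Or.inl (ht.trans_le hx.1).ne')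
    (fun x hx => by
      simpa using (hasDerivAt_rpow_const (p := 1 - s) (Or.inl (ht.trans hx.1).ne')))
  rw [add_sub_cancel_left, div_one] at hc
  have hdecr : (t + 1) ^ (-s) ≤ c ^ (-s) :=
    rpow_le_rpow_of_nonpos (ht.trans htc) hct.le (by linarith)
  nlinarith

lemma sum_range_rpow_neg_le {s K : ℝ} (hs : 1 < s) (hK : 0 < K) (N : ℕ) :
    ∑ k ∈ Finset.range N, (K + 1 + k) ^ (-s) ≤ K ^ (1 - s) / (s - 1) := by
  have hs' : 0 < s - 1 := sub_pos.2 hs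
  set f : ℕ → ℝ := fun k => (K + k) ^ (1 - s)
  have hterm : ∀ k : ℕ, (K + 1 + k) ^ (-s) ≤ (f k - f (k + 1)) / (s - 1) := fun k => by
    rw [le_div_iff₀' hs']
    simpa [f, add_right_comm, add_assoc] using
      mul_rpow_neg_le_sub_rpow hs.le (by positivity : 0 < K + k)
  calc ∑ k ∈ Finset.range N, (K + 1 + k) ^ (-s)
      ≤ ∑ k ∈ Finset.range N, (f k - f (k + 1)) / (s - 1) := Finset.sum_le_sum fun k _ => hterm k
    _ = (f 0 - f N) / (s - 1) := by rw [← Finset.sum_div, Finset.sum_range_sub']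
    _ ≤ K ^ (1 - s) / (s - 1) := by
      gcongr
      simpa [f] using rpow_nonneg (by positivity : 0 ≤ K + N) (1 - s)

lemma summable_rpow_neg_add {s K : ℝ} (hs : 1 < s) (hK : 0 < K) :
    Summable fun k : ℕ => (K + 1 + k) ^ (-s) :=
  summable_of_sum_range_le (fun _ => by positivity) (sum_range_rpow_neg_le hs hK)

lemma tsum_rpow_neg_add_le {s K : ℝ} (hs : 1 < s) (hK : 0 < K) :
    ∑' k : ℕ, (K + 1 + k) ^ (-s) ≤ K ^ (1 - s) / (s - 1) :=
  tsum_le_of_sum_range_le (fun _ => by positivity) (sum_range_rpow_neg_le hs hK)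

private lemma one_add_abs_natCast_succ (n : ℕ) : 1 + |(((n + 1 : ℕ) : ℤ) : ℝ)| = 1 + 1 + n := by
  push_cast
  rw [abs_of_nonneg (by positivity)]
  ring

private lemma one_add_abs_neg_natCast_succ (n : ℕ) : 1 + |((-(n + 1) : ℤ) : ℝ)| = 1 + 1 + n := by
  push_cast
  rw [abs_neg, abs_of_nonneg (by positivity)]
  ring

lemma summable_int_one_add_abs_rpow_neg {s : ℝ} (hs : 1 < s) :
    Summable fun z : ℤ => (1 + |(z : ℝ)|) ^ (-s) := by
  have h := summable_rpow_neg_add hs one_pos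
  refine .of_nat_of_neg_add_one ((summable_nat_add_iff 1).1 ?_) ?_
  · simpa only [one_add_abs_natCast_succ] using h
  · simpa only [one_add_abs_neg_natCast_succ] using h

lemma tsum_int_one_add_abs_rpow_neg_le {s : ℝ} (hs : 1 < s) :
    ∑' z : ℤ, (1 + |(z : ℝ)|) ^ (-s) ≤ (s + 1) / (s - 1) := by
  have h := summable_rpow_neg_add hs one_pos
  have hT := tsum_rpow_neg_add_le hs one_pos
  have hnat : Summable fun n : ℕ => (1 + |((n : ℤ) : ℝ)|) ^ (-s) :=
    (summable_nat_add_iff 1).1 (by simpa only [one_add_abs_natCast_succ] using h)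
  have hneg : Summable fun n : ℕ => (1 + |((-(n + 1) : ℤ) : ℝ)|) ^ (-s) := by
    simpa only [one_add_abs_neg_natCast_succ] using h
  rw [tsum_of_nat_of_neg_add_one (f := fun z : ℤ => (1 + |(z : ℝ)|) ^ (-s)) hnat hneg,
    hnat.tsum_eq_zero_add]
  simp only [one_add_abs_natCast_succ, one_add_abs_neg_natCast_succ]
  rw [one_rpow] at hT
  have hs' : 0 < s - 1 := sub_pos.2 hs
  calc _ ≤ 1 + 1 / (s - 1) + 1 / (s - 1) := by norm_num at hT ⊢; linarith
    _ = (s + 1) / (s - 1) := by field_simp; ring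

end Real

lemma tsum_le_sum_tsum_of_le {ι κ : Type*} {f : ι → ℝ} {F : κ → ι → ℝ} {S : Finset κ}
    (hf : ∀ i, 0 ≤ f i) (hF : ∀ l ∈ S, Summable (F l)) (hfF : ∀ i, f i ≤ ∑ l ∈ S, F l i) :
    ∑' i, f i ≤ ∑ l ∈ S, ∑' i, F l i := by
  rw [← Summable.tsum_finsetSum hF]
  exact Summable.tsum_le_tsum hfF (.of_nonneg_of_le hf hfF (summable_sum hF)) (summable_sum hF)

lemma norm_inner_sum_smul_sq_le {𝕜 E ι : Type*} [RCLike 𝕜] [NormedAddCommGroup E]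
    [InnerProductSpace 𝕜 E] (S : Finset ι) (a : ι → 𝕜) (v : ι → E) (w : E) {c : ι → ℝ}
    (hc : ∀ l ∈ S, ‖⟪v l, w⟫_𝕜‖ ≤ c l) :
    ‖⟪∑ l ∈ S, a l • v l, w⟫_𝕜‖ ^ 2 ≤ (∑ l ∈ S, ‖a l‖ ^ 2) * ∑ l ∈ S, c l ^ 2 := by
  have h : ‖⟪∑ l ∈ S, a l • v l, w⟫_𝕜‖ ≤ ∑ l ∈ S, ‖a l‖ * c l := by
    rw [sum_inner]
    refine (norm_sum_le _ _).trans (Finset.sum_le_sum fun l hl => ?_)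
    rw [inner_smul_left, norm_mul, RCLike.norm_conj]
    exact mul_le_mul_of_nonneg_left (hc l hl) (norm_nonneg _)
  exact (pow_le_pow_left₀ (norm_nonneg _) h 2).trans (Finset.sum_mul_sq_le_sq_mul_sq S _ _)

open Real

noncomputable def polyWeight (s : ℝ) (x y : ℕ) : ℝ := (1 + |(x : ℝ) - y|) ^ (-s)

lemma polyWeight_comm (s : ℝ) (x y : ℕ) : polyWeight s x y = polyWeight s y x := by
  rw [polyWeight, polyWeight, abs_sub_comm]

lemma polyWeight_nonneg (s : ℝ) (x y : ℕ) : 0 ≤ polyWeight s x y := by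
  unfold polyWeight; positivity

lemma polyWeight_add_eq {m l : ℕ} (hl : l ≤ m) (s : ℝ) (k : ℕ) :
    polyWeight s (m + 1 + k) l = ((m + 1 - l : ℝ) + 1 + k) ^ (-s) := by
  have : (l : ℝ) ≤ m := Nat.cast_le.2 hl
  rw [polyWeight, abs_of_nonneg (by push_cast; linarith)]
  push_cast
  ring_nf

lemma summable_polyWeight_add {s : ℝ} (hs : 1 < s) {m l : ℕ} (hl : l ≤ m) :
    Summable fun k : ℕ => polyWeight s (m + 1 + k) l := by
  simpa only [polyWeight_add_eq hl] using
    summable_rpow_neg_add hs (by linarith [(Nat.cast_le (α := ℝ)).2 hl])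

lemma tsum_polyWeight_add_le {s : ℝ} (hs : 1 < s) {m n l : ℕ} (hl : l ≤ n) (hnm : n < m) :
    ∑' k : ℕ, polyWeight s (m + 1 + k) l ≤ ((m : ℝ) - n) ^ (-(s - 1)) / (s - 1) := by
  have hl' : (l : ℝ) ≤ n := Nat.cast_le.2 hl
  have hnm' : (n : ℝ) + 1 ≤ m := by exact_mod_cast hnm
  simp only [polyWeight_add_eq (hl.trans hnm.le)]
  refine (tsum_rpow_neg_add_le (K := m + 1 - l) hs (by linarith)).trans ?_
  rw [neg_sub]
  exact div_le_div_of_nonneg_right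
    (rpow_le_rpow_of_nonpos (by linarith) (by linarith) (by linarith)) (by linarith)

private lemma polyWeight_succ_eq (s : ℝ) (l : ℕ) :
    (fun k : ℕ => polyWeight s (k + 1) l) =
      (fun z : ℤ => (1 + |(z : ℝ)|) ^ (-s)) ∘ fun k : ℕ => (k + 1 - l : ℤ) := by
  ext k
  simp [polyWeight]

private lemma injective_natCast_add_sub (l : ℕ) :
    Function.Injective fun k : ℕ => (k + 1 - l : ℤ) :=
  fun _ _ h => by simpa using h

lemma summable_polyWeight_succ {s : ℝ} (hs : 1 < s) (l : ℕ) :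
    Summable fun k : ℕ => polyWeight s (k + 1) l := by
  rw [polyWeight_succ_eq]
  exact (summable_int_one_add_abs_rpow_neg hs).comp_injective (injective_natCast_add_sub l)

lemma tsum_polyWeight_succ_le {s : ℝ} (hs : 1 < s) (l : ℕ) :
    ∑' k : ℕ, polyWeight s (k + 1) l ≤ 2 * s / (s - 1) := by
  rw [polyWeight_succ_eq]
  refine (tsum_comp_le_tsum_of_inj (summable_int_one_add_abs_rpow_neg hs)
    (fun _ => by positivity) (injective_natCast_add_sub l)).trans
    ((tsum_int_one_add_abs_rpow_neg_le hs).trans ?_)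
  gcongr
  linarith

def quadrantEquiv (m : ℕ) : ℕ × ℕ ≃ {p : ℕ × ℕ // m < p.1 ∧ 1 ≤ p.2} where
  toFun k := ⟨(m + 1 + k.1, k.2 + 1), by omega, by omega⟩
  invFun p := (p.1.1 - (m + 1), p.1.2 - 1)
  left_inv k := by simp
  right_inv p := by ext <;> simp <;> omega

section quadrant

variable {s : ℝ} {m : ℕ} {l : ℕ × ℕ}

private lemma summable_polyWeight_add_mul_polyWeight_succ (hs : 1 < s) (hl : l.1 ≤ m) :
    Summable fun k : ℕ × ℕ => polyWeight s (m + 1 + k.1) l.1 * polyWeight s (k.2 + 1) l.2 :=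
  (summable_polyWeight_add hs hl).mul_of_nonneg (summable_polyWeight_succ hs l.2)
    (fun _ => polyWeight_nonneg ..) (fun _ => polyWeight_nonneg ..)

lemma summable_polyWeight_mul_quadrant (hs : 1 < s) (hl : l.1 ≤ m) :
    Summable fun j : {p : ℕ × ℕ // m < p.1 ∧ 1 ≤ p.2} =>
      polyWeight s j.1.1 l.1 * polyWeight s j.1.2 l.2 :=
  (quadrantEquiv m).summable_iff.1 (summable_polyWeight_add_mul_polyWeight_succ hs hl)

lemma tsum_polyWeight_mul_quadrant_le (hs : 1 < s) {n : ℕ} (hl : l.1 ≤ n) (hnm : n < m) :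
    ∑' j : {p : ℕ × ℕ // m < p.1 ∧ 1 ≤ p.2}, polyWeight s j.1.1 l.1 * polyWeight s j.1.2 l.2
      ≤ ((m : ℝ) - n) ^ (-(s - 1)) / (s - 1) * (2 * s / (s - 1)) := by
  rw [← (quadrantEquiv m).tsum_eq]
  refine Eq.trans_le (((summable_polyWeight_add hs (hl.trans hnm.le)).tsum_mul_tsum
    (summable_polyWeight_succ hs l.2)
    (summable_polyWeight_add_mul_polyWeight_succ hs (hl.trans hnm.le))).symm) ?_
  have htail := tsum_polyWeight_add_le hs hl hnm
  exact mul_le_mul htail (tsum_polyWeight_succ_le hs l.2)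
    (tsum_nonneg fun _ => polyWeight_nonneg ..)
    ((tsum_nonneg fun _ => polyWeight_nonneg ..).trans htail)

end quadrant

lemma one_add_mul_one_add_le_sq_one_add_dst (j l : ℕ × ℕ) :
    (1 + |(j.1 : ℝ) - l.1|) * (1 + |(j.2 : ℝ) - l.2|) ≤ (1 + dst j l) ^ 2 := by
  have h1 : |(j.1 : ℝ) - l.1| ≤ dst j l := abs_le_sqrt (by nlinarith)
  have h2 : |(j.2 : ℝ) - l.2| ≤ dst j l := abs_le_sqrt (by nlinarith)
  have := abs_nonneg ((j.1 : ℝ) - l.1)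
  have := abs_nonneg ((j.2 : ℝ) - l.2)
  nlinarith

lemma sq_one_add_dst_rpow_neg_le {s : ℝ} (hs : 0 ≤ s) (j l : ℕ × ℕ) :
    ((1 + dst j l) ^ (-s)) ^ 2 ≤ polyWeight s j.1 l.1 * polyWeight s j.2 l.2 := by
  have hD : 0 ≤ dst j l := sqrt_nonneg _
  rw [sq, polyWeight, polyWeight, ← mul_rpow (by positivity) (by positivity),
    ← mul_rpow (by positivity) (by positivity), ← sq]
  exact rpow_le_rpow_of_nonpos (by positivity) (one_add_mul_one_add_le_sq_one_add_dst j l)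
    (by linarith)

theorem stmt12_general {H : Type*} [NormedAddCommGroup H] [InnerProductSpace ℂ H]
    (s γ : ℝ) (hs : 2 < s)
    (ψ : ℕ × ℕ → H)
    (hloc : ∀ j l : ℕ × ℕ, 1 ≤ j.1 → 1 ≤ j.2 → 1 ≤ l.1 → 1 ≤ l.2 →
      ‖⟪ψ j, ψ l⟫_ℂ‖ ≤ γ * (1 + dst j l) ^ (-s))
    (n : ℕ × ℕ)
    (a : ℕ × ℕ → ℂ) (g : H)
    (hg : g = ∑ l ∈ Finset.Icc ((1, 1) : ℕ × ℕ) n, a l • ψ l)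
    (m₁ : ℕ) (hm : n.1 < m₁) :
    ∑' j : {p : ℕ × ℕ // m₁ < p.1 ∧ 1 ≤ p.2}, ‖⟪g, ψ j.1⟫_ℂ‖^2
      ≤ (∑ l ∈ Finset.Icc ((1, 1) : ℕ × ℕ) n, ‖a l‖^2) *
        (2 * s * γ^2 / (s - 1)^2) * (n.1 : ℝ) * (n.2 : ℝ) *
        ((m₁ : ℝ) - (n.1 : ℝ)) ^ (-(s - 1)) := by
  have hs1 : 1 < s := by linarith
  set S := Finset.Icc ((1, 1) : ℕ × ℕ) n
  set F : ℕ × ℕ → {p : ℕ × ℕ // m₁ < p.1 ∧ 1 ≤ p.2} → ℝ := fun l j =>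
    (∑ l ∈ S, ‖a l‖ ^ 2) * γ ^ 2 * (polyWeight s j.1.1 l.1 * polyWeight s j.1.2 l.2)
  have hS : ∀ l ∈ S, 1 ≤ l.1 ∧ 1 ≤ l.2 ∧ l.1 ≤ n.1 := fun l hl => by
    simp only [S, Finset.mem_Icc, Prod.le_def] at hl
    omega
  have hpointwise : ∀ j, ‖⟪g, ψ j.1⟫_ℂ‖ ^ 2 ≤ ∑ l ∈ S, F l j := fun ⟨j, hj₁, hj₂⟩ => by
    rw [hg]
    refine (norm_inner_sum_smul_sq_le S a ψ (ψ j) fun l hl =>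
      hloc l j (hS l hl).1 (hS l hl).2.1 (by omega) hj₂).trans ?_
    rw [Finset.mul_sum]
    gcongr with l
    dsimp only [F]
    rw [mul_pow, ← mul_assoc, polyWeight_comm s j.1, polyWeight_comm s j.2]
    gcongr
    exact sq_one_add_dst_rpow_neg_le (by linarith) l j
  have hF : ∀ l ∈ S, ∑' j, F l j ≤ (∑ l ∈ S, ‖a l‖ ^ 2) * γ ^ 2 *
      (((m₁ : ℝ) - n.1) ^ (-(s - 1)) / (s - 1) * (2 * s / (s - 1))) := fun l hl => by
    rw [tsum_mul_left]
    gcongr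
    exact tsum_polyWeight_mul_quadrant_le hs1 (hS l hl).2.2 hm
  calc _ ≤ ∑ l ∈ S, ∑' j, F l j := tsum_le_sum_tsum_of_le (fun _ => sq_nonneg _)
        (fun l hl => (summable_polyWeight_mul_quadrant hs1 ((hS l hl).2.2.trans hm.le)).mul_left _)
        hpointwise
    _ ≤ _ := (Finset.sum_le_sum hF).trans_eq ?_
  rw [Finset.sum_const, Finset.card_Icc_prod, Nat.card_Icc, Nat.card_Icc]
  push_cast
  field_simp
  ring

theorem stmt12 {H : Type*} [NormedAddCommGroup H] [InnerProductSpace ℂ H]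
    (s A B γ : ℝ) (hs : 2 < s) (hA : 0 < A) (hB : 0 < B) (hγ : 0 < γ)
    (ψ : ℕ × ℕ → H)
    (hframe : ∀ g : H,
      A * ‖g‖^2 ≤ ∑' p : Pos2, ‖⟪g, ψ p.1⟫_ℂ‖^2 ∧
      ∑' p : Pos2, ‖⟪g, ψ p.1⟫_ℂ‖^2 ≤ B * ‖g‖^2)
    (hloc : ∀ j l : ℕ × ℕ, 1 ≤ j.1 → 1 ≤ j.2 → 1 ≤ l.1 → 1 ≤ l.2 →
      ‖⟪ψ j, ψ l⟫_ℂ‖ ≤ γ * (1 + dst j l) ^ (-s))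
    (n : ℕ × ℕ) (hn1 : 1 ≤ n.1) (hn2 : 1 ≤ n.2)
    (a : ℕ × ℕ → ℂ) (g : H)
    (hg : g = ∑ l ∈ Finset.Icc ((1, 1) : ℕ × ℕ) n, a l • ψ l)
    (m₁ : ℕ) (hm : n.1 < m₁) :
    ∑' j : {p : ℕ × ℕ // m₁ < p.1 ∧ 1 ≤ p.2}, ‖⟪g, ψ j.1⟫_ℂ‖^2
      ≤ (∑ l ∈ Finset.Icc ((1, 1) : ℕ × ℕ) n, ‖a l‖^2) *
        (2 * s * γ^2 / (s - 1)^2) * (n.1 : ℝ) * (n.2 : ℝ) *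
        ((m₁ : ℝ) - (n.1 : ℝ)) ^ (-(s - 1)) :=
  stmt12_general s γ hs ψ hloc n a g hg m₁ hm
end
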